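/- For D > 0, r_r > 0, λ > 0, N > 0, t > 0, the expected total number of molecules absorbed by time t, given by 4πλN ∫_{r_r}^∞ (r_r/r)·erfc((r−r_r)/√(4Dt))·r² dr, equals 4√π·λ·N·r_r·[ Dt√π + 2 r_r √(Dt) ]. In particular, it grows without bound as t → ∞. -/

import Mathlib

/-!
With `y = (r - r_r) / s`, `s = √(4Dt)`, the integrand `(r_r / r) erfc(y) r²` becomes
`r_r s (r_r + s y) erfc y`, so everything reduces to the moments `∫₀^∞ erfc = 1/√π` and
`∫₀^∞ y erfc y = 1/4`. Both come from explicit primitives, `y erfc y - e^{-y²}/√π` and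
`(y²/2 - 1/4) erfc y - y e^{-y²}/(2√π)`, which vanish at infinity since `erfc y ≤ e^{-y²}` for
`y ≥ 1`. The integrand is nonnegative, so the fundamental theorem of calculus on `[r_r, ∞)` needs
no separate integrability argument. The closed form is linear in `t` plus a nonnegative term,
hence unbounded.
-/

open Real MeasureTheory Filter

/-- The complementary error function `erfc x = (2/√π) ∫_x^∞ e^{−u²} du`. -/
noncomputable def erfc (x : ℝ) : ℝ :=
  (2 / Real.sqrt π) * ∫ u in Set.Ioi x, Real.exp (-u ^ 2)

open Set Topology

lemma integrable_exp_neg_sq : Integrable (fun u : ℝ => exp (-u ^ 2)) := by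
  simpa using integrable_exp_neg_mul_sq one_pos

lemma integrable_mul_exp_neg_sq : Integrable (fun u : ℝ => u * exp (-u ^ 2)) := by
  simpa using integrable_mul_exp_neg_mul_sq one_pos

lemma erfc_nonneg (x : ℝ) : 0 ≤ erfc x :=
  mul_nonneg (by positivity) (setIntegral_nonneg measurableSet_Ioi fun u _ => (exp_pos _).le)

lemma erfc_zero : erfc 0 = 1 := by
  have h : ∫ u in Ioi (0 : ℝ), exp (-u ^ 2) = √π / 2 := by
    simpa using integral_gaussian_Ioi 1
  rw [erfc, h]
  field_simp

lemma erfc_eq_sub_intervalIntegral (x : ℝ) :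
    erfc x = 2 / √π * ((∫ u in Ioi 0, exp (-u ^ 2)) - ∫ u in (0 : ℝ)..x, exp (-u ^ 2)) := by
  rw [erfc, ← intervalIntegral.integral_interval_add_Ioi (a := 0) (b := x)
    integrable_exp_neg_sq.integrableOn integrable_exp_neg_sq.integrableOn, add_sub_cancel_left]

lemma hasDerivAt_erfc (x : ℝ) : HasDerivAt erfc (-(2 / √π * exp (-x ^ 2))) x := by
  have hcont : Continuous fun u : ℝ => exp (-u ^ 2) := by fun_prop
  have hprim : HasDerivAt (fun y => ∫ u in (0 : ℝ)..y, exp (-u ^ 2)) (exp (-x ^ 2)) x :=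
    intervalIntegral.integral_hasDerivAt_right integrable_exp_neg_sq.intervalIntegrable
      (hcont.stronglyMeasurableAtFilter _ _) hcont.continuousAt
  rw [funext erfc_eq_sub_intervalIntegral, ← mul_neg]
  exact (hprim.const_sub _).const_mul _

lemma integral_Ioi_mul_exp_neg_sq (x : ℝ) :
    ∫ u in Ioi x, u * exp (-u ^ 2) = exp (-x ^ 2) / 2 := by
  have hderiv (u : ℝ) : HasDerivAt (fun v => -exp (-v ^ 2) / 2) (u * exp (-u ^ 2)) u := by
    refine ((hasDerivAt_pow 2 u).neg.exp.neg.div_const 2).congr_deriv ?_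
    simp only [Pi.neg_apply]
    ring
  have htend : Tendsto (fun v : ℝ => -exp (-v ^ 2) / 2) atTop (𝓝 0) := by
    have := tendsto_exp_atBot.comp (tendsto_neg_atTop_atBot.comp (tendsto_pow_atTop two_ne_zero))
    simpa using (this.neg.div_const 2)
  rw [integral_Ioi_of_hasDerivAt_of_tendsto' (fun u _ => hderiv u)
    integrable_mul_exp_neg_sq.integrableOn htend]
  ring

lemma erfc_le_exp_neg_sq {x : ℝ} (hx : 1 ≤ x) : erfc x ≤ exp (-x ^ 2) := by
  have hpi : 1 ≤ √π := one_le_sqrt.mpr (by linarith [pi_gt_three])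
  -- on `[x, ∞)` the Gaussian is dominated by `u e^{-u²}`, whose tail integral is explicit
  have htail : ∫ u in Ioi x, exp (-u ^ 2) ≤ exp (-x ^ 2) / 2 := by
    rw [← integral_Ioi_mul_exp_neg_sq]
    refine setIntegral_mono_on integrable_exp_neg_sq.integrableOn
      integrable_mul_exp_neg_sq.integrableOn measurableSet_Ioi fun u hu => ?_
    exact le_mul_of_one_le_left (exp_pos _).le (hx.trans (le_of_lt hu))
  calc erfc x ≤ 2 / √π * (exp (-x ^ 2) / 2) := by
        rw [erfc]; gcongr
    _ = exp (-x ^ 2) / √π := by ring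
    _ ≤ exp (-x ^ 2) := div_le_self (exp_pos _).le hpi

lemma tendsto_pow_mul_exp_neg_sq (n : ℕ) :
    Tendsto (fun x : ℝ => x ^ n * exp (-x ^ 2)) atTop (𝓝 0) := by
  refine tendsto_of_tendsto_of_tendsto_of_le_of_le' tendsto_const_nhds
    (tendsto_pow_mul_exp_neg_atTop_nhds_zero n) ?_ ?_
  · filter_upwards [eventually_ge_atTop 0] with x hx using by positivity
  · filter_upwards [eventually_ge_atTop 1] with x hx
    gcongr
    nlinarith

lemma tendsto_pow_mul_erfc (n : ℕ) : Tendsto (fun x : ℝ => x ^ n * erfc x) atTop (𝓝 0) := by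
  refine tendsto_of_tendsto_of_tendsto_of_le_of_le' tendsto_const_nhds
    (tendsto_pow_mul_exp_neg_sq n) ?_ ?_
  · filter_upwards [eventually_ge_atTop 0] with x hx using mul_nonneg (by positivity) (erfc_nonneg x)
  · filter_upwards [eventually_ge_atTop 1] with x hx
    gcongr
    exact erfc_le_exp_neg_sq hx

noncomputable def erfcPrimitive (y : ℝ) : ℝ :=
  y * erfc y - exp (-y ^ 2) / √π

noncomputable def mulErfcPrimitive (y : ℝ) : ℝ :=
  (y ^ 2 / 2 - 1 / 4) * erfc y - y * exp (-y ^ 2) / (2 * √π)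

lemma hasDerivAt_erfcPrimitive (y : ℝ) : HasDerivAt erfcPrimitive (erfc y) y := by
  have hpi : √π ≠ 0 := (sqrt_pos.mpr pi_pos).ne'
  refine (((hasDerivAt_id y).mul (hasDerivAt_erfc y)).sub
    ((hasDerivAt_pow 2 y).neg.exp.div_const √π)).congr_deriv ?_
  simp only [id_eq, Pi.neg_apply]
  field_simp
  ring

lemma hasDerivAt_mulErfcPrimitive (y : ℝ) : HasDerivAt mulErfcPrimitive (y * erfc y) y := by
  have hpi : √π ≠ 0 := (sqrt_pos.mpr pi_pos).ne'
  refine (((((hasDerivAt_pow 2 y).div_const 2).sub_const (1 / 4)).mul (hasDerivAt_erfc y)).sub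
    (((hasDerivAt_id y).mul (hasDerivAt_pow 2 y).neg.exp).div_const (2 * √π))).congr_deriv ?_
  simp only [id_eq, Pi.neg_apply]
  field_simp
  ring

lemma erfcPrimitive_zero : erfcPrimitive 0 = -(1 / √π) := by
  simp [erfcPrimitive, erfc_zero]

lemma mulErfcPrimitive_zero : mulErfcPrimitive 0 = -(1 / 4) := by
  norm_num [mulErfcPrimitive, erfc_zero]

lemma tendsto_erfcPrimitive : Tendsto erfcPrimitive atTop (𝓝 0) := by
  have h := (tendsto_pow_mul_erfc 1).sub ((tendsto_pow_mul_exp_neg_sq 0).div_const √π)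
  simp only [pow_one, pow_zero, one_mul, zero_div, sub_zero] at h
  exact h

lemma tendsto_mulErfcPrimitive : Tendsto mulErfcPrimitive atTop (𝓝 0) := by
  have h := (((tendsto_pow_mul_erfc 2).div_const 2).sub ((tendsto_pow_mul_erfc 0).div_const 4)).sub
    ((tendsto_pow_mul_exp_neg_sq 1).div_const (2 * √π))
  simp only [zero_div, sub_zero] at h
  refine h.congr fun y => ?_
  simp only [mulErfcPrimitive]
  ring

lemma integral_Ioi_mul_erfc_sub_div {a s : ℝ} (ha : 0 ≤ a) (hs : 0 < s) :
    ∫ r in Ioi a, r * erfc ((r - a) / s) = s * (a / √π + s / 4) := by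
  have hy (r : ℝ) : HasDerivAt (fun r => (r - a) / s) (1 / s) r :=
    ((hasDerivAt_id r).sub_const a).div_const s
  -- with `y = (r - a) / s` the integrand is `(a + s y) erfc y`
  set F := fun r => s * (a * erfcPrimitive ((r - a) / s) + s * mulErfcPrimitive ((r - a) / s))
  have hderiv (r : ℝ) : HasDerivAt F (r * erfc ((r - a) / s)) r := by
    refine (((((hasDerivAt_erfcPrimitive _).comp r (hy r)).const_mul a).add
      (((hasDerivAt_mulErfcPrimitive _).comp r (hy r)).const_mul s)).const_mul s).congr_deriv ?_
    field_simp
    ring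
  have hnonneg (r : ℝ) (hr : r ∈ Ioi a) : 0 ≤ r * erfc ((r - a) / s) :=
    mul_nonneg (ha.trans (le_of_lt hr)) (erfc_nonneg _)
  have hlim : Tendsto (fun r => (r - a) / s) atTop atTop :=
    (tendsto_atTop_add_const_right _ (-a) tendsto_id).atTop_div_const hs
  have hF : Tendsto F atTop (𝓝 0) := by
    simpa using (((tendsto_erfcPrimitive.comp hlim).const_mul a).add
      ((tendsto_mulErfcPrimitive.comp hlim).const_mul s)).const_mul s
  rw [integral_Ioi_of_hasDerivAt_of_nonneg' (fun r _ => hderiv r) hnonneg hF]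
  simp only [F, sub_self, zero_div, erfcPrimitive_zero, mulErfcPrimitive_zero]
  ring

lemma integral_Ioi_div_mul_erfc_mul_sq {a s : ℝ} (ha : 0 < a) (hs : 0 < s) :
    ∫ r in Ioi a, (a / r) * erfc ((r - a) / s) * r ^ 2 = a * s * (a / √π + s / 4) := by
  have hintegrand : EqOn (fun r => (a / r) * erfc ((r - a) / s) * r ^ 2)
      (fun r => a * (r * erfc ((r - a) / s))) (Ioi a) := fun r hr => by
    have : r ≠ 0 := (ha.trans hr).ne'
    field_simp
  rw [setIntegral_congr_fun measurableSet_Ioi hintegrand, integral_const_mul,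
    integral_Ioi_mul_erfc_sub_div ha.le hs, mul_assoc]

lemma absorption_integral_eq (lam N : ℝ) {D rr t : ℝ} (hrr : 0 < rr) (hDt : 0 < D * t) :
    4 * π * lam * N *
        (∫ r in Ioi rr, (rr / r) * erfc ((r - rr) / √(4 * D * t)) * r ^ 2) =
      4 * √π * lam * N * rr * (D * t * √π + 2 * rr * √(D * t)) := by
  have hs : √(4 * D * t) = 2 * √(D * t) := by
    rw [mul_assoc, sqrt_mul zero_le_four, show (4 : ℝ) = 2 ^ 2 by norm_num, sqrt_sq zero_le_two]
  have hsq : √(D * t) ^ 2 = D * t := sq_sqrt hDt.le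
  have hpi : √π ^ 2 = π := sq_sqrt pi_pos.le
  rw [integral_Ioi_div_mul_erfc_mul_sq hrr (sqrt_pos.mpr (by linarith)), hs]
  field_simp
  linear_combination lam * N * ((4 * √π * π) * hsq - (8 * √(D * t) * rr + 4 * √π * D * t) * hpi)

/-- Expected total number of molecules absorbed by time `t` by a fully absorbing
sphere from a Poisson field of transmitters, in closed form; it grows without
bound as `t → ∞`. -/
theorem expected_total_absorption
    (D rr lam N : ℝ) (hD : 0 < D) (hrr : 0 < rr) (hlam : 0 < lam) (hN : 0 < N) :
    (∀ t : ℝ, 0 < t →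
      4 * π * lam * N *
        (∫ r in Set.Ioi rr, (rr / r) * erfc ((r - rr) / Real.sqrt (4 * D * t)) * r ^ 2) =
        4 * Real.sqrt π * lam * N * rr *
          (D * t * Real.sqrt π + 2 * rr * Real.sqrt (D * t))) ∧
    Tendsto (fun t : ℝ =>
        4 * π * lam * N *
          ∫ r in Set.Ioi rr, (rr / r) * erfc ((r - rr) / Real.sqrt (4 * D * t)) * r ^ 2)
      atTop atTop := by
  have closed_form (t : ℝ) (ht : 0 < t) := absorption_integral_eq lam N hrr (mul_pos hD ht)
  refine ⟨closed_form, ?_⟩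
  have hgrowth : Tendsto (fun t => 4 * √π * lam * N * rr * (D * t * √π + 2 * rr * √(D * t)))
      atTop atTop := by
    have hlinear : Tendsto (fun t => D * t * √π) atTop atTop :=
      (tendsto_id.const_mul_atTop hD).atTop_mul_const (sqrt_pos.mpr pi_pos)
    exact (hlinear.atTop_add_nonneg fun t => by positivity).const_mul_atTop (by positivity)
  refine hgrowth.congr' ?_
  filter_upwards [eventually_gt_atTop 0] with t ht using (closed_form t ht).symm
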